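/- Let X be an infinite subset of Zar(F) and let x ∈ F. If x lies in the maximal ideal 𝔪_V for all but finitely many valuation rings V in X, then x ∈ 𝔪_U for every patch limit point U of X. -/

import Mathlib

open Set

/-- A subring `V` of a field `F` is a valuation ring of `F` (with quotient field `F`). -/
def IsValSubring (F : Type*) [Field F] (V : Subring F) : Prop :=
  ∀ t : F, t ≠ 0 → t ∈ V ∨ t⁻¹ ∈ V

/-- The Zariski-Riemann space of the field `F`: the set of valuation rings of `F`. -/
def Zar (F : Type*) [Field F] : Type _ := {V : Subring F // IsValSubring F V}

/-- The patch (constructible) topology on `Zar F`, generated by the sets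
`{V : x ∈ V}` and `{V : y ∉ V}` for `x, y ∈ F`. -/
instance Zar.patchTopology (F : Type*) [Field F] : TopologicalSpace (Zar F) :=
  TopologicalSpace.generateFrom
    ({S | ∃ x : F, S = {V : Zar F | x ∈ V.1}} ∪ {S | ∃ y : F, S = {V : Zar F | y ∉ V.1}})

variable {F : Type*} [Field F]

/-- The maximal ideal of a valuation ring of `F`, as a subset of `F`. -/
def mIdeal (V : Zar F) : Set F := {x : F | x ∈ V.1 ∧ (x = 0 ∨ x⁻¹ ∉ V.1)}

/-- `A(X)`: the intersection of the valuation rings in `X`, as a subset of `F`. -/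
def aSet (X : Set (Zar F)) : Set F := ⋂ V ∈ X, ((V : Zar F).1 : Set F)

/-- `A(X)` as a subring of `F`. -/
def ASub (X : Set (Zar F)) : Subring F := ⨅ V ∈ X, (V : Zar F).1

/-- `J(X)`: the intersection of the maximal ideals of the valuation rings in `X`. -/
def jSet (X : Set (Zar F)) : Set F := ⋂ V ∈ X, mIdeal V

/-- The set of limit points of `X` in the patch topology of `Zar F`. -/
def limPts (X : Set (Zar F)) : Set (Zar F) :=
  {V : Zar F | ∀ U : Set (Zar F), IsOpen U → V ∈ U → ∃ W ∈ X, W ≠ V ∧ W ∈ U}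

/-!
The patch topology is Hausdorff, and `{V | x ∉ 𝔪_V}` is patch-open. So if a limit point `U` of `X`
had `x ∉ 𝔪_U`, that open set would be a neighbourhood of `U`, making `U` an accumulation point of
the finite set `{V ∈ X | x ∉ 𝔪_V}`, which is impossible in a T1 space.
-/

open Filter Topology

namespace Zar

lemma isOpen_setOf_mem (t : F) : IsOpen {V : Zar F | t ∈ V.1} :=
  TopologicalSpace.GenerateOpen.basic _ (Or.inl ⟨t, rfl⟩)

lemma isOpen_setOf_notMem (t : F) : IsOpen {V : Zar F | t ∉ V.1} :=
  TopologicalSpace.GenerateOpen.basic _ (Or.inr ⟨t, rfl⟩)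

instance instT2Space : T2Space (Zar F) where
  t2 U W hUW := by
    obtain ⟨t, htU, htW⟩ | ⟨t, htW, htU⟩ :
        (∃ t ∈ U.1, t ∉ W.1) ∨ (∃ t ∈ W.1, t ∉ U.1) := by
      by_contra! h
      exact hUW (Subtype.ext (Subring.ext fun t => ⟨h.1 t, h.2 t⟩))
    · exact ⟨_, _, isOpen_setOf_mem t, isOpen_setOf_notMem t, htU, htW,
        disjoint_left.mpr fun _ h₁ h₂ => h₂ h₁⟩
    · exact ⟨_, _, isOpen_setOf_notMem t, isOpen_setOf_mem t, htU, htW,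
        disjoint_left.mpr fun _ h₁ h₂ => h₁ h₂⟩

/-- For `x ≠ 0`, `x ∉ 𝔪_V` means `x ∉ V` or `x⁻¹ ∈ V`; for `x = 0` the set is empty. -/
lemma isOpen_setOf_notMem_mIdeal (x : F) : IsOpen {V : Zar F | x ∉ mIdeal V} := by
  rcases eq_or_ne x 0 with rfl | hx
  · convert isOpen_empty
    ext V
    simp [mIdeal]
  · convert (isOpen_setOf_notMem x).union (isOpen_setOf_mem x⁻¹) using 1
    ext V
    simp only [mIdeal, hx, false_or, mem_ofPred_eq, mem_union, not_and, not_not]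
    tauto

lemma mem_limPts_iff_accPt {X : Set (Zar F)} {U : Zar F} : U ∈ limPts X ↔ AccPt U (𝓟 X) := by
  rw [accPt_iff_nhds]
  constructor
  · intro hU N hN
    obtain ⟨O, hON, hO, hUO⟩ := mem_nhds_iff.mp hN
    obtain ⟨W, hWX, hWU, hWO⟩ := hU O hO hUO
    exact ⟨W, ⟨hON hWO, hWX⟩, hWU⟩
  · intro hU O hO hUO
    obtain ⟨W, ⟨hWO, hWX⟩, hWU⟩ := hU O (hO.mem_nhds hUO)
    exact ⟨W, hWX, hWU, hWO⟩

end Zar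

theorem stmt3_general (X : Set (Zar F)) (x : F)
    (h : {V ∈ X | x ∉ mIdeal V}.Finite) :
    ∀ U ∈ limPts X, x ∈ mIdeal U := by
  intro U hU
  by_contra hx
  have hacc : AccPt U (𝓟 ({V | x ∉ mIdeal V} ∩ X)) :=
    (Zar.mem_limPts_iff_accPt.mp hU).nhds_inter ((Zar.isOpen_setOf_notMem_mIdeal x).mem_nhds hx)
  exact Set.Infinite.of_accPt hacc (h.subset fun V ⟨hxV, hV⟩ => ⟨hV, hxV⟩)

theorem stmt3 (X : Set (Zar F)) (hX : X.Infinite) (x : F)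
    (h : {V ∈ X | x ∉ mIdeal V}.Finite) :
    ∀ U ∈ limPts X, x ∈ mIdeal U :=
  stmt3_general X x h
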